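/- arXiv:2604.03559 — 5 statements merged into one kernel-verified Lean document; each statement's English description precedes it below -/
import Mathlib

section
/- Consider maximizing Π(D₁,D₂) = π(D₁+D₂) - Σᵢ(aDᵢ² + (b - a·D̄ᵢ)Dᵢ) over 0 ≤ Dᵢ ≤ D̄ᵢ subject to D₁+D₂ = Dₛ, where a>0, 0 < D̄₁ < D̄₂, 0 < Dₛ < D̄₁+D̄₂, and π - b + a·D̄ᵢ > 0 for i=1,2. Then the unique maximizer satisfies D₁* = min(D̄₁, max(0, Dₛ/2 + (D̄₁ - D̄₂)/4)) and D₂* = Dₛ - D₁*. -/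
/-- Two-consumer profit maximization with binding aggregated-energy constraint
`D₁+D₂ = Dₛ`: the unique maximizer is `D₁* = min(D̄₁, max(0, Dₛ/2 + (D̄₁-D̄₂)/4))`,
`D₂* = Dₛ - D₁*`. -/
theorem profit_binding_unique_maximizer
    (a b π Dbar1 Dbar2 Ds : ℝ) (ha : 0 < a)
    (hDbar1 : 0 < Dbar1) (hDbar12 : Dbar1 < Dbar2)
    (hDs0 : 0 < Ds) (hDs : Ds < Dbar1 + Dbar2)
    (h1 : π - b + a * Dbar1 > 0) (h2 : π - b + a * Dbar2 > 0)
    (Prof : ℝ × ℝ → ℝ)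
    (hProf : ∀ D : ℝ × ℝ, Prof D = π * (D.1 + D.2)
      - ((a * D.1^2 + (b - a * Dbar1) * D.1) + (a * D.2^2 + (b - a * Dbar2) * D.2)))
    (S : Set (ℝ × ℝ))
    (hS : S = {D : ℝ × ℝ | D.1 ∈ Set.Icc 0 Dbar1 ∧ D.2 ∈ Set.Icc 0 Dbar2 ∧ D.1 + D.2 = Ds})
    (D1s D2s : ℝ)
    (hD1s : D1s = min Dbar1 (max 0 (Ds / 2 + (Dbar1 - Dbar2) / 4)))
    (hD2s : D2s = Ds - D1s) :
    IsMaxOn Prof S (D1s, D2s) ∧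
    ∀ D ∈ S, Prof D = Prof (D1s, D2s) → D = (D1s, D2s) := by
  -- vertex of the restricted quadratic
  have hproj : ∀ x : ℝ, 0 ≤ x → x ≤ Dbar1 →
      (D1s - (Ds / 2 + (Dbar1 - Dbar2) / 4))^2 ≤ (x - (Ds / 2 + (Dbar1 - Dbar2) / 4))^2 ∧
      ((x - (Ds / 2 + (Dbar1 - Dbar2) / 4))^2 = (D1s - (Ds / 2 + (Dbar1 - Dbar2) / 4))^2
        → x = D1s) := by
    intro x hx0 hx1
    set t := Ds / 2 + (Dbar1 - Dbar2) / 4 with hT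
    rcases le_total t 0 with hc | hc
    · have hmax : max 0 t = 0 := max_eq_left hc
      have hmin : D1s = 0 := by rw [hD1s, hmax, min_eq_right hDbar1.le]
      rw [hmin]
      constructor
      · nlinarith
      · intro heq; nlinarith
    · rcases le_total Dbar1 t with hc2 | hc2
      · have hmax : max 0 t = t := max_eq_right hc
        have hmin : D1s = Dbar1 := by rw [hD1s, hmax, min_eq_left hc2]
        rw [hmin]
        constructor
        · nlinarith
        · intro heq; nlinarith
      · have hmax : max 0 t = t := max_eq_right hc
        have hmin : D1s = t := by rw [hD1s, hmax, min_eq_right hc2]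
        rw [hmin]
        constructor
        · nlinarith
        · intro heq
          have : (x - t)^2 = 0 := by simpa using heq
          have : x - t = 0 := by
            exact pow_eq_zero_iff (n := 2) (by norm_num) |>.mp this
          linarith
  have hq : ∀ x : ℝ, Prof (x, Ds - x) = Prof (D1s, D2s)
      + 2 * a * ((D1s - (Ds / 2 + (Dbar1 - Dbar2) / 4))^2
                 - (x - (Ds / 2 + (Dbar1 - Dbar2) / 4))^2) := by
    intro x
    rw [hProf, hProf, hD2s]
    ring
  constructor
  · intro D hD
    rw [hS] at hD
    obtain ⟨⟨h1a, h1b⟩, ⟨h2a, h2b⟩, hsum⟩ := hD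
    have hD2 : D.2 = Ds - D.1 := by linarith
    have hDe : D = (D.1, Ds - D.1) := by
      rw [← hD2]
    have hle := (hproj D.1 h1a h1b).1
    have := hq D.1
    have hnn : 0 ≤ 2 * a * ((D.1 - (Ds / 2 + (Dbar1 - Dbar2) / 4))^2
        - (D1s - (Ds / 2 + (Dbar1 - Dbar2) / 4))^2) :=
      mul_nonneg (by linarith) (by linarith)
    calc Prof D = Prof (D.1, Ds - D.1) := by rw [← hDe]
    _ ≤ Prof (D1s, D2s) := by linarith
  · intro D hD heq
    rw [hS] at hD
    obtain ⟨⟨h1a, h1b⟩, ⟨h2a, h2b⟩, hsum⟩ := hD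
    have hD2 : D.2 = Ds - D.1 := by linarith
    have hDe : D = (D.1, Ds - D.1) := by rw [← hD2]
    have hqD := hq D.1
    rw [← hDe] at hqD
    rw [heq] at hqD
    have hsq : (D.1 - (Ds / 2 + (Dbar1 - Dbar2) / 4))^2
        = (D1s - (Ds / 2 + (Dbar1 - Dbar2) / 4))^2 := by
      have ha2 : (2 : ℝ) * a ≠ 0 := by positivity
      have := (hproj D.1 h1a h1b).1
      nlinarith
    have hx := (hproj D.1 h1a h1b).2 hsq
    have h2' : D.2 = D2s := by rw [hD2, hD2s, hx]
    exact Prod.ext hx h2'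
end

section
/- Under the assumptions a>0, 0 < D̄₁ < D̄₂, π - b + a·D̄₁ > 0, and Dₛ < D̄₁ + D̄₂, the profit-only optimal solution (D₁*, D₂*) of the two-consumer aggregator problem always satisfies D₁* < D₂*. -/
theorem min_max_zero_lt_half {u Ds Dbar1 Dbar2 : ℝ} (hDs0 : 0 < Ds) (hDbar12 : Dbar1 < Dbar2) :
    min u (max 0 (Ds / 2 + (Dbar1 - Dbar2) / 4)) < Ds / 2 :=
  (min_le_right _ _).trans_lt (max_lt (half_pos hDs0) (by linarith))

theorem min_add_half_lt_add_half {s Dbar1 Dbar2 : ℝ} (hDbar12 : Dbar1 < Dbar2) :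
    min (s + Dbar1 / 2) Dbar1 < s + Dbar2 / 2 :=
  (min_le_left _ _).trans_lt (by linarith)

theorem profit_only_favors_flexible_general
    (a b π Dbar1 Dbar2 Ds : ℝ)
    (hDbar12 : Dbar1 < Dbar2)
    (hDs0 : 0 < Ds)
    -- binding-cap case optimal solution
    (D1b D2b : ℝ)
    (hD1b : D1b = min Dbar1 (max 0 (Ds / 2 + (Dbar1 - Dbar2) / 4)))
    (hD2b : D2b = Ds - D1b)
    -- slack case optimal solution
    (D1n D2n : ℝ)
    (hD1n : D1n = min ((π - b) / (2*a) + Dbar1 / 2) Dbar1)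
    (hD2n : D2n = (π - b) / (2*a) + Dbar2 / 2) :
    D1b < D2b ∧ D1n < D2n := by
  subst hD1b hD2b hD1n hD2n
  constructor
  · linarith [min_max_zero_lt_half (u := Dbar1) hDs0 hDbar12]
  · exact min_add_half_lt_add_half hDbar12

/-- The profit-only optimal solution always satisfies `D₁* < D₂*`, in both the
binding-cap case and the slack case. -/
theorem profit_only_favors_flexible
    (a b π Dbar1 Dbar2 Ds : ℝ) (ha : 0 < a)
    (hDbar1 : 0 < Dbar1) (hDbar12 : Dbar1 < Dbar2)
    (hDs0 : 0 < Ds) (hDs : Ds < Dbar1 + Dbar2)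
    (h1 : π - b + a * Dbar1 > 0)
    -- binding-cap case optimal solution
    (D1b D2b : ℝ)
    (hD1b : D1b = min Dbar1 (max 0 (Ds / 2 + (Dbar1 - Dbar2) / 4)))
    (hD2b : D2b = Ds - D1b)
    -- slack case optimal solution
    (D1n D2n : ℝ)
    (hD1n : D1n = min ((π - b) / (2*a) + Dbar1 / 2) Dbar1)
    (hD2n : D2n = (π - b) / (2*a) + Dbar2 / 2) :
    D1b < D2b ∧ D1n < D2n :=
  profit_only_favors_flexible_general a b π Dbar1 Dbar2 Ds hDbar12 hDs0 D1b D2b hD1b hD2b D1n D2n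
    hD1n hD2n
end

section
/- In the two-consumer linear-response model with a>0, b>0, and 0 < D̄₁ < D̄₂, if a uniform price p₁ = p₂ = p is charged and both energy fairness (d₁(p)/D̄₁ = d₂(p)/D̄₂), price fairness, and utility fairness (U₁ = U₂) hold simultaneously, then necessarily p ≤ b - a·D̄₂, both provided energies are zero, both utilities are zero, and the aggregator's profit π(d₁(p)+d₂(p)) - p(d₁(p)+d₂(p)) equals zero. -/
/-!
Write `x = (p - b) / a`, so that consumer `i` provides `min D̄ᵢ (max 0 (x + D̄ᵢ))`.
For `x < 0 < x + D̄₂` the second consumer's share `1 + x / D̄₂` lies strictly between `0` and `1`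
and strictly exceeds the first consumer's share, so energy fairness forces `x ≥ 0` or
`x + D̄₂ ≤ 0`. If `x ≥ 0` both consumers are saturated and `Uᵢ = (p - b) D̄ᵢ + a D̄ᵢ² / 2` is
strictly increasing in `D̄ᵢ`, contradicting utility fairness. Hence `x + D̄₂ ≤ 0`, and then
nobody provides energy.
-/

def clippedResponse (x D : ℝ) : ℝ := min D (max 0 (x + D))

noncomputable def utility (a b D p d : ℝ) : ℝ := p * d - ((1/2) * a * d ^ 2 + (b - a * D) * d)

lemma clippedResponse_of_nonneg {x D : ℝ} (hx : 0 ≤ x) (hD : 0 ≤ D) :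
    clippedResponse x D = D := by
  rw [clippedResponse, max_eq_right (by linarith), min_eq_left (by linarith)]

lemma clippedResponse_of_add_nonpos {x D : ℝ} (hx : x + D ≤ 0) (hD : 0 ≤ D) :
    clippedResponse x D = 0 := by
  rw [clippedResponse, max_eq_left hx, min_eq_right hD]

lemma clippedResponse_div_lt_div {x D₁ D₂ : ℝ} (hD₁ : 0 < D₁) (hD₁₂ : D₁ < D₂)
    (hx : x < 0) (hxD₂ : 0 < x + D₂) :
    clippedResponse x D₁ / D₁ < clippedResponse x D₂ / D₂ := by
  have hD₂ : 0 < D₂ := hD₁.trans hD₁₂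
  have hresp₂ : clippedResponse x D₂ = x + D₂ := by
    rw [clippedResponse, max_eq_right hxD₂.le, min_eq_right (by linarith)]
  rw [div_lt_div_iff₀ hD₁ hD₂, hresp₂]
  have hresp₁ : clippedResponse x D₁ ≤ max 0 (x + D₁) := min_le_right _ _
  rcases max_cases 0 (x + D₁) with ⟨hmax, -⟩ | ⟨hmax, -⟩ <;> rw [hmax] at hresp₁
  · nlinarith
  · nlinarith

lemma nonneg_or_add_nonpos_of_clippedResponse_div_eq {x D₁ D₂ : ℝ} (hD₁ : 0 < D₁)
    (hD₁₂ : D₁ < D₂) (hfair : clippedResponse x D₁ / D₁ = clippedResponse x D₂ / D₂) :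
    0 ≤ x ∨ x + D₂ ≤ 0 := by
  by_contra! h
  exact (clippedResponse_div_lt_div hD₁ hD₁₂ h.1 h.2).ne hfair

lemma utility_saturated_lt {a b p D₁ D₂ : ℝ} (hp : b ≤ p) (ha : 0 < a) (hD₁ : 0 ≤ D₁)
    (hD₁₂ : D₁ < D₂) : utility a b D₁ p D₁ < utility a b D₂ p D₂ := by
  have hsat (D : ℝ) : utility a b D p D = (p - b) * D + a / 2 * D ^ 2 := by
    rw [utility]; ring
  rw [hsat, hsat]
  nlinarith [mul_nonneg (sub_nonneg.2 hp) (sub_nonneg.2 hD₁₂.le),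
    mul_pos ha (mul_pos (by linarith : 0 < D₂ + D₁) (sub_pos.2 hD₁₂))]

theorem impossibility_of_perfect_fairness_general
    (a b π p Dbar1 Dbar2 : ℝ) (ha : 0 < a)
    (hDbar1 : 0 < Dbar1) (hDbar12 : Dbar1 < Dbar2)
    (d1 d2 : ℝ → ℝ)
    (hd1 : ∀ q, d1 q = min Dbar1 (max 0 ((q - b) / a + Dbar1)))
    (hd2 : ∀ q, d2 q = min Dbar2 (max 0 ((q - b) / a + Dbar2)))
    (U1 U2 : ℝ)
    (hU1 : U1 = p * d1 p - ((1/2) * a * (d1 p)^2 + (b - a * Dbar1) * (d1 p)))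
    (hU2 : U2 = p * d2 p - ((1/2) * a * (d2 p)^2 + (b - a * Dbar2) * (d2 p)))
    -- energy fairness at the uniform price
    (hEnergyFair : d1 p / Dbar1 = d2 p / Dbar2)
    -- utility fairness
    (hUtilityFair : U1 = U2) :
    p ≤ b - a * Dbar2 ∧ d1 p = 0 ∧ d2 p = 0 ∧ U1 = 0 ∧ U2 = 0 ∧
    π * (d1 p + d2 p) - p * (d1 p + d2 p) = 0 := by
  have hDbar2 : 0 < Dbar2 := hDbar1.trans hDbar12
  have e1 : d1 p = clippedResponse ((p - b) / a) Dbar1 := hd1 p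
  have e2 : d2 p = clippedResponse ((p - b) / a) Dbar2 := hd2 p
  rw [e1, e2] at hEnergyFair
  rcases nonneg_or_add_nonpos_of_clippedResponse_div_eq hDbar1 hDbar12 hEnergyFair with hx | hx
  · have hbp : b ≤ p := by linarith [(le_div_iff₀ ha).1 hx]
    rw [e1, clippedResponse_of_nonneg hx hDbar1.le] at hU1
    rw [e2, clippedResponse_of_nonneg hx hDbar2.le] at hU2
    exact absurd (hU1.symm.trans (hUtilityFair.trans hU2))
      (utility_saturated_lt hbp ha hDbar1.le hDbar12).ne
  · have hz1 : d1 p = 0 := by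
      rw [e1, clippedResponse_of_add_nonpos (by linarith) hDbar1.le]
    have hz2 : d2 p = 0 := by
      rw [e2, clippedResponse_of_add_nonpos hx hDbar2.le]
    have hp : p - b ≤ -Dbar2 * a := (div_le_iff₀ ha).1 (by linarith)
    refine ⟨by linarith, hz1, hz2, ?_, ?_, ?_⟩ <;> simp [hU1, hU2, hz1, hz2]

/-- Impossibility of Perfect Fairness: at a uniform price `p`, simultaneous
energy, price and utility fairness force `p ≤ b - a·D̄₂`, zero provided energies, zero
utilities, and zero aggregator profit. -/
theorem impossibility_of_perfect_fairness
    (a b π p Dbar1 Dbar2 : ℝ) (ha : 0 < a) (hb : 0 < b)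
    (hDbar1 : 0 < Dbar1) (hDbar12 : Dbar1 < Dbar2)
    (d1 d2 : ℝ → ℝ)
    (hd1 : ∀ q, d1 q = min Dbar1 (max 0 ((q - b) / a + Dbar1)))
    (hd2 : ∀ q, d2 q = min Dbar2 (max 0 ((q - b) / a + Dbar2)))
    (U1 U2 : ℝ)
    (hU1 : U1 = p * d1 p - ((1/2) * a * (d1 p)^2 + (b - a * Dbar1) * (d1 p)))
    (hU2 : U2 = p * d2 p - ((1/2) * a * (d2 p)^2 + (b - a * Dbar2) * (d2 p)))
    -- energy fairness at the uniform price
    (hEnergyFair : d1 p / Dbar1 = d2 p / Dbar2)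
    -- utility fairness
    (hUtilityFair : U1 = U2) :
    p ≤ b - a * Dbar2 ∧ d1 p = 0 ∧ d2 p = 0 ∧ U1 = 0 ∧ U2 = 0 ∧
    π * (d1 p + d2 p) - p * (d1 p + d2 p) = 0 :=
  impossibility_of_perfect_fairness_general a b π p Dbar1 Dbar2 ha hDbar1 hDbar12 d1 d2 hd1 hd2 U1
    U2 hU1 hU2 hEnergyFair hUtilityFair
end

section
/- Under the binding α-price-fairness constraint with interior solutions D₁(α) = D₁* - (Δ_p/(2a))α, D₂(α) = D₂* + (Δ_p/(2a))α (Δ_p = (a/2)(D̄₂-D̄₁) > 0, D₁(α) > 0), the social welfare W_SW(α) = Σᵢ[πDᵢ(α) - (1/2)aDᵢ(α)² - (b - a·D̄ᵢ)Dᵢ(α)] has derivative W_SW'(α) = a·(Δ_p/(2a))·(D̄₂ - D̄₁)·(1-α)/2 > 0 for α ∈ [0,1), and the consumer Nash welfare W_CNW(α) = log((1/2)aD₁(α)²) + log((1/2)aD₂(α)²) has derivative W_CNW'(α) = (Δ_p/a)(1/D₂(α) - 1/D₁(α)) < 0 whenever D₁(α) < D₂(α). -/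
/-!
Each `Dᵢ` moves at speed `∓c` with `c = Δp/(2a)`, and the marginal surplus of consumer `i` is
`π - a Dᵢ - (b - a D̄ᵢ)`. Hence `W_SW' = a c ((D̄₂ - D̄₁) - (D₂ - D₁))`, which the gap identity
`D₂ - D₁ = (D̄₂ - D̄₁)(1 + α)/2` turns into `a c (D̄₂ - D̄₁)(1 - α)/2`. Since `log (a D²/2)` has
logarithmic derivative `2 D'/D`, `W_CNW' = 2c (1/D₂ - 1/D₁)`, negative as soon as `D₁ < D₂`.
-/

theorem HasDerivAt.quadratic_surplus {D : ℝ → ℝ} {s x : ℝ} (p a k : ℝ) (hD : HasDerivAt D s x) :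
    HasDerivAt (fun y => p * D y - (1/2) * a * D y ^ 2 - k * D y) ((p - a * D x - k) * s) x := by
  refine (((hD.const_mul p).sub ((hD.pow 2).const_mul ((1/2) * a))).sub
    (hD.const_mul k)).congr_deriv ?_
  ring

theorem HasDerivAt.log_half_mul_sq {D : ℝ → ℝ} {s x a : ℝ} (ha : a ≠ 0)
    (hD : HasDerivAt D s x) (hx : D x ≠ 0) :
    HasDerivAt (fun y => Real.log ((1/2) * a * D y ^ 2)) (2 * s / D x) x := by
  have hne : (1/2) * a * D x ^ 2 ≠ 0 := by positivity
  refine (((hD.pow 2).const_mul ((1/2) * a)).log hne).congr_deriv ?_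
  simp only [Pi.pow_apply]
  field_simp
  ring

/-- Along the binding α-price-fairness path, social welfare is strictly
increasing on `[0,1)` and consumer Nash welfare is strictly decreasing whenever
`D₁(α) < D₂(α)`. -/
theorem price_fairness_welfare_derivatives
    (a b π Dbar1 Dbar2 : ℝ) (ha : 0 < a) (hDbar12 : Dbar1 < Dbar2)
    (D1s D2s Δp : ℝ)
    (hΔp : Δp = (a / 2) * (Dbar2 - Dbar1))
    (D1 D2 : ℝ → ℝ)
    (hD1 : ∀ α, D1 α = D1s - (Δp / (2*a)) * α)
    (hD2 : ∀ α, D2 α = D2s + (Δp / (2*a)) * α)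
    (WSW WCNW : ℝ → ℝ)
    (hWSW : ∀ α, WSW α = (π * D1 α - (1/2) * a * (D1 α)^2 - (b - a * Dbar1) * D1 α)
                       + (π * D2 α - (1/2) * a * (D2 α)^2 - (b - a * Dbar2) * D2 α))
    (hWCNW : ∀ α, WCNW α = Real.log ((1/2) * a * (D1 α)^2)
                         + Real.log ((1/2) * a * (D2 α)^2))
    (α : ℝ) (hα : α ∈ Set.Ico (0:ℝ) 1)
    (hpos : 0 < D1 α) (hlt : D1 α < D2 α)
    (hgap : D2 α - D1 α = ((Dbar2 - Dbar1) / 2) * (1 + α)) :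
    (HasDerivAt WSW (a * (Δp / (2*a)) * (Dbar2 - Dbar1) * (1 - α) / 2) α ∧
      0 < a * (Δp / (2*a)) * (Dbar2 - Dbar1) * (1 - α) / 2) ∧
    (HasDerivAt WCNW ((Δp / a) * (1 / D2 α - 1 / D1 α)) α ∧
      (Δp / a) * (1 / D2 α - 1 / D1 α) < 0) := by
  set c := Δp / (2*a)
  have hgap_pos : 0 < Dbar2 - Dbar1 := sub_pos.mpr hDbar12
  have hΔp_pos : 0 < Δp := hΔp ▸ by positivity
  have hD1' : HasDerivAt D1 (-c) α := by
    rw [funext hD1]; simpa using ((hasDerivAt_id α).const_mul c).const_sub D1s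
  have hD2' : HasDerivAt D2 c α := by
    rw [funext hD2]; simpa using ((hasDerivAt_id α).const_mul c).const_add D2s
  have hSW := (hD1'.quadratic_surplus π a (b - a * Dbar1)).add
    (hD2'.quadratic_surplus π a (b - a * Dbar2))
  have hCNW := (hD1'.log_half_mul_sq ha.ne' hpos.ne').add
    (hD2'.log_half_mul_sq ha.ne' (hpos.trans hlt).ne')
  refine ⟨⟨?_, ?_⟩, ?_, ?_⟩
  · rw [funext hWSW]
    refine hSW.congr_deriv ?_
    linear_combination (-(a * c)) * hgap
  · have : 0 < 1 - α := sub_pos.mpr hα.2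
    positivity
  · rw [funext hWCNW]
    refine hCNW.congr_deriv ?_
    have hc : Δp / a = 2 * c := by simp only [c]; field_simp
    rw [hc]
    field_simp
    ring
  · exact mul_neg_of_pos_of_neg (by positivity) (sub_neg.mpr (one_div_lt_one_div_of_lt hpos hlt))
end

section
/- Under binding aggregated energy D₁(α)+D₂(α)=Dₛ and binding energy fairness with D₁(α) = D̄₁(D̄₁ + D̄₂ + α(Dₛ - D̄₁ - D̄₂))/(D̄₁+D̄₂), D₂(α) = Dₛ - D₁(α), with D̄₁ < D̄₂, 2D̄₁ < Dₛ < D̄₁ + D̄₂: the social welfare derivative equals W_SW'(α) = a·D₁'(α)·(Dₛ - 2D₁(α) + D̄₁ - D̄₂), where D₁'(α) = -D̄₁(D̄₁+D̄₂-Dₛ)/(D̄₁+D̄₂) < 0, and Dₛ - 2D₁(α) + D̄₁ - D̄₂ = (D̄₁+D̄₂-Dₛ)((2α-1)D̄₁ - D̄₂)/(D̄₁+D̄₂) < 0 for all α ∈ [0,1], hence W_SW'(α) > 0. -/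
/-- energy-fairness Regime 2: along the path with binding aggregated energy
and binding energy fairness, `D₁'(α) < 0`, `Dₛ - 2D₁(α) + D̄₁ - D̄₂ < 0` on `[0,1]`, and
hence social welfare is strictly increasing. -/
theorem energy_fairness_regime2_sw_increasing
    (a b π Dbar1 Dbar2 Ds : ℝ) (ha : 0 < a)
    (hDbar1 : 0 < Dbar1) (hDbar12 : Dbar1 < Dbar2)
    (hDs1 : 2 * Dbar1 < Ds) (hDs2 : Ds < Dbar1 + Dbar2)
    (D1 D2 : ℝ → ℝ)
    (hD1 : ∀ α, D1 α = Dbar1 * (Dbar1 + Dbar2 + α * (Ds - Dbar1 - Dbar2)) / (Dbar1 + Dbar2))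
    (hD2 : ∀ α, D2 α = Ds - D1 α)
    (d1' : ℝ) (hd1' : d1' = -(Dbar1 * (Dbar1 + Dbar2 - Ds)) / (Dbar1 + Dbar2))
    (WSW : ℝ → ℝ)
    (hWSW : ∀ α, WSW α = π * (D1 α + D2 α)
        - ((1/2) * a * (D1 α)^2 + (b - a * Dbar1) * D1 α)
        - ((1/2) * a * (D2 α)^2 + (b - a * Dbar2) * D2 α)) :
    (∀ α, HasDerivAt D1 d1' α) ∧ d1' < 0 ∧
    (∀ α ∈ Set.Icc (0:ℝ) 1,
      Ds - 2 * D1 α + Dbar1 - Dbar2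
        = (Dbar1 + Dbar2 - Ds) * ((2 * α - 1) * Dbar1 - Dbar2) / (Dbar1 + Dbar2) ∧
      Ds - 2 * D1 α + Dbar1 - Dbar2 < 0) ∧
    (∀ α ∈ Set.Icc (0:ℝ) 1,
      HasDerivAt WSW (a * d1' * (Ds - 2 * D1 α + Dbar1 - Dbar2)) α ∧
      0 < a * d1' * (Ds - 2 * D1 α + Dbar1 - Dbar2)) := by
  have hS : (0:ℝ) < Dbar1 + Dbar2 := by linarith
  have hSne : (Dbar1 + Dbar2) ≠ 0 := ne_of_gt hS
  -- linear form of D1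
  have hlin : ∀ α, D1 α = Dbar1 + d1' * α := by
    intro α
    rw [hD1, hd1']
    field_simp
    ring
  have hderiv1 : ∀ α, HasDerivAt D1 d1' α := by
    intro α
    have h : HasDerivAt (fun x : ℝ => Dbar1 + d1' * x) d1' α := by
      simpa using ((hasDerivAt_id α).const_mul d1').const_add Dbar1
    exact h.congr_of_eventuallyEq (Filter.Eventually.of_forall fun x => (hlin x))
  have hd1'neg : d1' < 0 := by
    rw [hd1']
    apply div_neg_of_neg_of_pos _ hS
    have : 0 < Dbar1 * (Dbar1 + Dbar2 - Ds) := mul_pos hDbar1 (by linarith)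
    linarith
  refine ⟨hderiv1, hd1'neg, ?_, ?_⟩
  · intro α hα
    obtain ⟨h0, h1⟩ := hα
    constructor
    · rw [hD1]; field_simp; ring
    · have heq : Ds - 2 * D1 α + Dbar1 - Dbar2
          = (Dbar1 + Dbar2 - Ds) * ((2 * α - 1) * Dbar1 - Dbar2) / (Dbar1 + Dbar2) := by
        rw [hD1]; field_simp; ring
      rw [heq]
      apply div_neg_of_neg_of_pos _ hS
      have h2 : (2*α - 1) * Dbar1 - Dbar2 < 0 := by nlinarith
      exact mul_neg_of_pos_of_neg (by linarith) h2
  · intro α hα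
    obtain ⟨h0, h1⟩ := hα
    constructor
    · -- WSW = F ∘ D1 with F quadratic
      set F : ℝ → ℝ := fun x => π * Ds - ((1/2) * a * x^2 + (b - a * Dbar1) * x)
          - ((1/2) * a * (Ds - x)^2 + (b - a * Dbar2) * (Ds - x)) with hF
      have hWF : ∀ x, WSW x = F (D1 x) := by
        intro x
        rw [hWSW, hD2, hF]
        ring
      have hFd : HasDerivAt F
          (-(a * (D1 α) + (b - a * Dbar1)) + (a * (Ds - D1 α) + (b - a * Dbar2))) (D1 α) := by
        have h1 : HasDerivAt (fun x : ℝ => x) 1 (D1 α) := hasDerivAt_id _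
        have hsq : HasDerivAt (fun x : ℝ => x^2) (2 * D1 α) (D1 α) := by
          simpa using (hasDerivAt_pow 2 (D1 α))
        have hsub : HasDerivAt (fun x : ℝ => Ds - x) (-1) (D1 α) := by
          simpa using (hasDerivAt_id (D1 α)).const_sub Ds
        have hsq2 : HasDerivAt (fun x : ℝ => (Ds - x)^2) (2 * (Ds - D1 α) * (-1)) (D1 α) := by
          have := (hasDerivAt_pow 2 (Ds - D1 α)).comp (D1 α) hsub
          simpa [pow_one, Function.comp_def] using this
        have := ((((hsq.const_mul ((1/2) * a)).add (h1.const_mul (b - a * Dbar1))).const_sub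
            (π * Ds)).sub ((hsq2.const_mul ((1/2) * a)).add (hsub.const_mul (b - a * Dbar2))))
        refine this.congr_deriv ?_
        ring
      have hcomp := hFd.comp α (hderiv1 α)
      have : HasDerivAt WSW
          ((-(a * (D1 α) + (b - a * Dbar1)) + (a * (Ds - D1 α) + (b - a * Dbar2))) * d1') α := by
        exact hcomp.congr_of_eventuallyEq (Filter.Eventually.of_forall fun x => (hWF x))
      convert this using 1
      ring
    · have hneg : Ds - 2 * D1 α + Dbar1 - Dbar2 < 0 := by
        have heq : Ds - 2 * D1 α + Dbar1 - Dbar2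
            = (Dbar1 + Dbar2 - Ds) * ((2 * α - 1) * Dbar1 - Dbar2) / (Dbar1 + Dbar2) := by
          rw [hD1]; field_simp; ring
        rw [heq]
        apply div_neg_of_neg_of_pos _ hS
        have h2 : (2*α - 1) * Dbar1 - Dbar2 < 0 := by nlinarith
        exact mul_neg_of_pos_of_neg (by linarith) h2
      have := mul_pos ha (mul_pos_of_neg_of_neg hd1'neg hneg)
      nlinarith
end
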